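/- arXiv:math-ph/0606042 — 2 statements merged into one kernel-verified Lean document; each statement's English description precedes it below -/
import Mathlib

section
/- The function u(t,x) = 2/(b₀(1 + exp(2α(x+vt)))) satisfies the PDE τ·u_tt + B·u_t − κ·u_xx = λ₁u + λ₂u² + λ₃u³, provided b₀ = (−λ₂ + sqrt(λ₂² − 4λ₁λ₃))/λ₁ (with λ₁ ≠ 0 and λ₂² − 4λ₁λ₃ ≥ 0), α = −(2λ₂ + 3b₀λ₁)/(4Bvb₀) with B ≠ 0, v ≠ 0, b₀ ≠ 0, and v² = κ(2λ₂ + 3b₀λ₁)²/(4λ₂²τ + 4b₀λ₂(B² + 3λ₁τ) + b₀²λ₁(2B² + 9λ₁τ)). -/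
/-!
The profile `(1 + exp ξ)⁻¹` is the logistic sigmoid `σ(-ξ)`, and `σ' = σ (1 - σ)`. Hence every
derivative of the traveling wave `u = c σ(k (x + v t))` is a polynomial in `u`, and the equation
reduces to matching the coefficients of `u`, `u²`, `u³`. The choice of `b₀` (a root of
`λ₁ b² + 2 λ₂ b + 4 λ₃`), of `α` and of `v²` is exactly what makes these three coefficients agree.
-/

noncomputable def pdt (u : ℝ → ℝ → ℝ) (t x : ℝ) : ℝ := deriv (fun s => u s x) t
noncomputable def pdx (u : ℝ → ℝ → ℝ) (t x : ℝ) : ℝ := deriv (fun y => u t y) x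
noncomputable def pdtt (u : ℝ → ℝ → ℝ) (t x : ℝ) : ℝ := deriv (fun s => pdt u s x) t
noncomputable def pdxx (u : ℝ → ℝ → ℝ) (t x : ℝ) : ℝ := deriv (fun y => pdx u t y) x

open Real

section TravelingWave

variable {g g' g'' : ℝ → ℝ} (k v : ℝ)

theorem pdt_travelingWave (hg : ∀ ξ, HasDerivAt g (g' ξ) ξ) :
    pdt (fun t x => g (k * (x + v * t))) = fun t x => k * v * g' (k * (x + v * t)) := by
  ext t x
  have hξ : HasDerivAt (fun s => k * (x + v * s)) (k * v) t := by
    simpa using (((hasDerivAt_id t).const_mul v).const_add x).const_mul k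
  exact ((hg _).comp t hξ).deriv.trans (mul_comm _ _)

theorem pdx_travelingWave (hg : ∀ ξ, HasDerivAt g (g' ξ) ξ) :
    pdx (fun t x => g (k * (x + v * t))) = fun t x => k * g' (k * (x + v * t)) := by
  ext t x
  have hξ : HasDerivAt (fun y => k * (y + v * t)) k x := by
    simpa using ((hasDerivAt_id x).add_const (v * t)).const_mul k
  exact ((hg _).comp x hξ).deriv.trans (mul_comm _ _)

theorem pdtt_travelingWave (hg : ∀ ξ, HasDerivAt g (g' ξ) ξ)
    (hg' : ∀ ξ, HasDerivAt g' (g'' ξ) ξ) :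
    pdtt (fun t x => g (k * (x + v * t))) = fun t x => (k * v) ^ 2 * g'' (k * (x + v * t)) := by
  have hkg' : ∀ ξ, HasDerivAt (fun ξ => k * v * g' ξ) (k * v * g'' ξ) ξ :=
    fun ξ => (hg' ξ).const_mul (k * v)
  change pdt (pdt _) = _
  rw [pdt_travelingWave k v hg, pdt_travelingWave k v hkg']
  ext t x
  ring

theorem pdxx_travelingWave (hg : ∀ ξ, HasDerivAt g (g' ξ) ξ)
    (hg' : ∀ ξ, HasDerivAt g' (g'' ξ) ξ) :
    pdxx (fun t x => g (k * (x + v * t))) = fun t x => k ^ 2 * g'' (k * (x + v * t)) := by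
  have hkg' : ∀ ξ, HasDerivAt (fun ξ => k * g' ξ) (k * g'' ξ) ξ :=
    fun ξ => (hg' ξ).const_mul k
  change pdx (pdx _) = _
  rw [pdx_travelingWave k v hg, pdx_travelingWave k v hkg']
  ext t x
  ring

end TravelingWave

theorem hasDerivAt_sigmoid_mul_one_sub (ξ : ℝ) :
    HasDerivAt (fun y => sigmoid y * (1 - sigmoid y))
      (sigmoid ξ * (1 - sigmoid ξ) * (1 - 2 * sigmoid ξ)) ξ := by
  have hσ := hasDerivAt_sigmoid ξ
  refine (hσ.mul (hσ.const_sub 1)).congr_deriv ?_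
  ring

theorem sigmoidWave_solves_telegraph {τ B κ l₁ l₂ l₃ c k v : ℝ}
    (h₃ : 2 * k ^ 2 * (τ * v ^ 2 - κ) = l₃ * c ^ 2)
    (h₂ : -3 * k ^ 2 * (τ * v ^ 2 - κ) - B * k * v = l₂ * c)
    (h₁ : k ^ 2 * (τ * v ^ 2 - κ) + B * k * v = l₁)
    {u : ℝ → ℝ → ℝ} (hu : u = fun t x => c * sigmoid (k * (x + v * t))) (t x : ℝ) :
    τ * pdtt u t x + B * pdt u t x - κ * pdxx u t x = l₁ * u t x + l₂ * u t x ^ 2 + l₃ * u t x ^ 3 := by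
  have hg : ∀ ξ, HasDerivAt (fun y => c * sigmoid y) (c * (sigmoid ξ * (1 - sigmoid ξ))) ξ :=
    fun ξ => (hasDerivAt_sigmoid ξ).const_mul c
  have hg' : ∀ ξ, HasDerivAt (fun y => c * (sigmoid y * (1 - sigmoid y)))
      (c * (sigmoid ξ * (1 - sigmoid ξ) * (1 - 2 * sigmoid ξ))) ξ :=
    fun ξ => (hasDerivAt_sigmoid_mul_one_sub ξ).const_mul c
  subst hu
  rw [pdtt_travelingWave k v hg hg', pdt_travelingWave k v hg, pdxx_travelingWave k v hg hg']
  set w := sigmoid (k * (x + v * t))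
  linear_combination c * w * (h₁ + w * h₂ + w ^ 2 * h₃)

theorem wave_speed_relation {τ B κ l₁ l₂ b α v : ℝ} (hB : B ≠ 0) (hv : v ≠ 0) (hb : b ≠ 0)
    (hα : 4 * B * v * b * α + 3 * l₁ * b + 2 * l₂ = 0)
    (hv2 : v ^ 2 = κ * (2 * l₂ + 3 * b * l₁) ^ 2 /
      (4 * l₂ ^ 2 * τ + 4 * b * l₂ * (B ^ 2 + 3 * l₁ * τ) + b ^ 2 * l₁ * (2 * B ^ 2 + 9 * l₁ * τ))) :
    8 * α ^ 2 * (κ - τ * v ^ 2) * b = l₁ * b + 2 * l₂ := by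
  have hD : 4 * l₂ ^ 2 * τ + 4 * b * l₂ * (B ^ 2 + 3 * l₁ * τ) + b ^ 2 * l₁ * (2 * B ^ 2 + 9 * l₁ * τ)
      ≠ 0 := by
    intro hD
    rw [hD, div_zero] at hv2
    exact hv (pow_eq_zero_iff two_ne_zero |>.mp hv2)
  rw [eq_div_iff hD] at hv2
  -- by `hα` the numerator is `κ (4 B v b α)²`, and the denominator is
  -- `τ (2 l₂ + 3 b l₁)² + 2 B² b (2 l₂ + b l₁)`
  have h : (2 * B ^ 2 * b * v ^ 2) * (8 * α ^ 2 * (κ - τ * v ^ 2) * b - (l₁ * b + 2 * l₂)) = 0 := by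
    linear_combination -hv2 + (τ * v ^ 2 - κ) * (2 * l₂ + 3 * b * l₁ - 4 * B * v * b * α) * hα
  have hne : 2 * B ^ 2 * b * v ^ 2 ≠ 0 := by positivity
  exact sub_eq_zero.mp ((mul_eq_zero.mp h).resolve_left hne)

theorem stmt_1 (τ B κ lam1 lam2 lam3 v b0 α : ℝ)
    (h1 : lam1 ≠ 0) (hdisc : lam2 ^ 2 - 4 * lam1 * lam3 ≥ 0)
    (hb0 : b0 = (-lam2 + Real.sqrt (lam2 ^ 2 - 4 * lam1 * lam3)) / lam1)
    (hB : B ≠ 0) (hv : v ≠ 0) (hb0ne : b0 ≠ 0)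
    (hα : α = -(2 * lam2 + 3 * b0 * lam1) / (4 * B * v * b0))
    (hveq : v ^ 2 = κ * (2 * lam2 + 3 * b0 * lam1) ^ 2 /
      (4 * lam2 ^ 2 * τ + 4 * b0 * lam2 * (B ^ 2 + 3 * lam1 * τ) + b0 ^ 2 * lam1 * (2 * B ^ 2 + 9 * lam1 * τ)))
    (u : ℝ → ℝ → ℝ)
    (hu : ∀ t x, u t x = 2 / (b0 * (1 + Real.exp (2 * α * (x + v * t))))) :
    ∀ t x, τ * pdtt u t x + B * pdt u t x - κ * pdxx u t x =
      lam1 * u t x + lam2 * u t x ^ 2 + lam3 * u t x ^ 3 := by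
  have hroot : lam1 * (b0 * b0) + 2 * lam2 * b0 + 4 * lam3 = 0 := by
    refine (quadratic_eq_zero_iff h1 (s := 2 * √(lam2 ^ 2 - 4 * lam1 * lam3)) ?_ b0).2 (Or.inl ?_)
    · rw [discrim]
      linear_combination (-4) * Real.sq_sqrt hdisc
    · rw [hb0]
      field_simp
  have hα' : 4 * B * v * b0 * α + 3 * lam1 * b0 + 2 * lam2 = 0 := by
    rw [hα]
    field_simp
    ring
  have hκ := wave_speed_relation hB hv hb0ne hα' hveq
  have hu' : u = fun t x => 2 / b0 * sigmoid (-2 * α * (x + v * t)) := by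
    funext t x
    rw [hu, sigmoid_def]
    field_simp
  refine sigmoidWave_solves_telegraph ?_ ?_ ?_ hu'
  · rw [div_pow, mul_div_assoc', eq_div_iff (pow_ne_zero 2 hb0ne)]
    linear_combination -b0 * hκ - hroot
  · rw [mul_div_assoc', eq_div_iff hb0ne]
    linear_combination (3 / 2 : ℝ) * hκ + (1 / 2 : ℝ) * hα'
  · refine mul_right_cancel₀ hb0ne ?_
    linear_combination -(1 / 2 : ℝ) * hκ - (1 / 2 : ℝ) * hα'
end

section
/- Suppose λ₁ > 0 and δ = τv² − κ > 0. Then u(t,x) = −(3λ₁/(2λ₂))·sech²(sqrt(λ₁/δ)·(x+vt)/2) satisfies τ·u_tt − κ·u_xx = λ₁u + λ₂u², provided λ₂ ≠ 0. -/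
open Real

section PlaneWave

variable {f f' f'' : ℝ → ℝ}

theorem hasDerivAt_planeWave_time (hf : ∀ y, HasDerivAt f (f' y) y) (a b t x : ℝ) :
    HasDerivAt (fun s => f (a * x + b * s)) (f' (a * x + b * t) * b) t := by
  have hline : HasDerivAt (fun s => a * x + b * s) b t := by
    simpa using ((hasDerivAt_id t).const_mul b).const_add (a * x)
  exact (hf _).comp t hline

theorem hasDerivAt_planeWave_space (hf : ∀ y, HasDerivAt f (f' y) y) (a b t x : ℝ) :
    HasDerivAt (fun y => f (a * y + b * t)) (f' (a * x + b * t) * a) x := by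
  have hline : HasDerivAt (fun y => a * y + b * t) a x := by
    simpa using ((hasDerivAt_id x).const_mul a).add_const (b * t)
  exact (hf _).comp x hline

theorem pdtt_planeWave (hf : ∀ y, HasDerivAt f (f' y) y) (hf' : ∀ y, HasDerivAt f' (f'' y) y)
    (a b t x : ℝ) :
    pdtt (fun t x => f (a * x + b * t)) t x = b ^ 2 * f'' (a * x + b * t) := by
  have hpdt : ∀ s, pdt (fun t x => f (a * x + b * t)) s x = f' (a * x + b * s) * b :=
    fun s => (hasDerivAt_planeWave_time hf a b s x).deriv
  simp only [pdtt, hpdt]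
  rw [((hasDerivAt_planeWave_time hf' a b t x).mul_const b).deriv]
  ring

theorem pdxx_planeWave (hf : ∀ y, HasDerivAt f (f' y) y) (hf' : ∀ y, HasDerivAt f' (f'' y) y)
    (a b t x : ℝ) :
    pdxx (fun t x => f (a * x + b * t)) t x = a ^ 2 * f'' (a * x + b * t) := by
  have hpdx : ∀ y, pdx (fun t x => f (a * x + b * t)) t y = f' (a * y + b * t) * a :=
    fun y => (hasDerivAt_planeWave_space hf a b t y).deriv
  simp only [pdxx, hpdx]
  rw [((hasDerivAt_planeWave_space hf' a b t x).mul_const a).deriv]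
  ring

end PlaneWave

namespace Real

theorem hasDerivAt_cosh_inv_sq (y : ℝ) :
    HasDerivAt (fun y => (cosh y)⁻¹ ^ 2) (-2 * sinh y / cosh y ^ 3) y := by
  have hcosh : cosh y ≠ 0 := (cosh_pos y).ne'
  refine (((hasDerivAt_cosh y).inv hcosh).fun_pow 2).congr_deriv ?_
  simp only [Pi.inv_apply, Nat.cast_ofNat, Nat.add_one_sub_one, pow_one]
  field_simp

theorem hasDerivAt_sinh_div_cosh_pow_three (y : ℝ) :
    HasDerivAt (fun y => -2 * sinh y / cosh y ^ 3)
      (4 * (cosh y)⁻¹ ^ 2 - 6 * ((cosh y)⁻¹ ^ 2) ^ 2) y := by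
  have hcosh : cosh y ≠ 0 := (cosh_pos y).ne'
  have hsq : sinh y ^ 2 = cosh y ^ 2 - 1 := sinh_sq y
  simp_rw [mul_div_assoc]
  refine (((hasDerivAt_sinh y).fun_div ((hasDerivAt_cosh y).fun_pow 3)
    (pow_ne_zero 3 hcosh)).const_mul (-2)).congr_deriv ?_
  field_simp
  linear_combination (6 * cosh y ^ 2) * hsq

end Real

theorem stmt_7 (τ κ lam1 lam2 v δ : ℝ)
    (hlam1 : lam1 > 0) (hlam2 : lam2 ≠ 0) (hδ : δ = τ * v ^ 2 - κ) (hδpos : δ > 0)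
    (u : ℝ → ℝ → ℝ)
    (hu : ∀ t x, u t x =
      -(3 * lam1 / (2 * lam2)) * (1 / Real.cosh (Real.sqrt (lam1 / δ) * (x + v * t) / 2)) ^ 2) :
    ∀ t x, τ * pdtt u t x - κ * pdxx u t x = lam1 * u t x + lam2 * u t x ^ 2 := by
  intro t x
  set k := -(3 * lam1 / (2 * lam2))
  set a := √(lam1 / δ) / 2 with ha_def
  have hu' : u = fun t x => k * (cosh (a * x + a * v * t))⁻¹ ^ 2 := by
    ext t x
    rw [hu, one_div, ha_def]
    ring_nf
  have hf (y : ℝ) := (hasDerivAt_cosh_inv_sq y).const_mul k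
  have hf' (y : ℝ) := (hasDerivAt_sinh_div_cosh_pow_three y).const_mul k
  have ha : δ * a ^ 2 = lam1 / 4 := by
    rw [div_pow, sq_sqrt (div_pos hlam1 hδpos).le]
    field_simp
    norm_num
  have hspeed : τ * (a * v) ^ 2 - κ * a ^ 2 = lam1 / 4 := by
    rw [← ha, hδ]
    ring
  have hk : lam2 * k = -(3 * lam1 / 2) := by
    simp only [k]
    field_simp
  rw [hu', pdtt_planeWave hf hf', pdxx_planeWave hf hf']
  set w := (cosh (a * x + a * v * t))⁻¹ ^ 2
  linear_combination k * (4 * w - 6 * w ^ 2) * hspeed - k * w ^ 2 * hk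
end
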